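/- The upward branches of ψ are bijections onto the next sublevel: for every word w ∈ {0,1}ⁿ and digit a ∈ {0,1}, if the step from w to wa is of type T₀ then ψ restricted to {(ω′,x,y) ∈ E_w : ω′₁ = a} is a bijection onto E_{wa}, and if the step is of type T₁ then ψ restricted to {(ω′,x,y) ∈ E_w : ω′₁ = a, x ∈ S ∪ R} is a bijection onto E_{wa}. -/

import Mathlib

open MeasureTheory Set Filter
open scoped Classical ENNReal

namespace RandomBeta

noncomputable section

/-- The left shift on `{0,1}^ℕ`. -/
def shift (ω : ℕ → Bool) : ℕ → Bool := fun n => ω (n + 1)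

/-- The digit complementation `ω̄ᵢ = 1 - ωᵢ`. -/
def compSeq (ω : ℕ → Bool) : ℕ → Bool := fun n => !(ω n)

/-- The interval `I_β = [0, 1/(β-1)]`. -/
def Ibeta (β : ℝ) : Set ℝ := Set.Icc 0 (1 / (β - 1))

/-- `L = [0, 1/β)`. -/
def Lset (β : ℝ) : Set ℝ := Set.Ico 0 (1 / β)

/-- `S = [1/β, 1/(β(β-1))]`. -/
def Sset (β : ℝ) : Set ℝ := Set.Icc (1 / β) (1 / (β * (β - 1)))

/-- `R = (1/(β(β-1)), 1/(β-1)]`. -/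
def Rset (β : ℝ) : Set ℝ := Set.Ioc (1 / (β * (β - 1))) (1 / (β - 1))

/-- The digit produced at the point `x` when the coin shows `a`:
`0` on `L`, `a` on `S`, `1` on `R`. -/
def digitB (β x : ℝ) (a : Bool) : Bool :=
  if x < 1 / β then false else if x ≤ 1 / (β * (β - 1)) then a else true

/-- One step of the random β-transformation on the second coordinate:
`T₀ x = βx` on `L`, `T_a x` on `S`, `T₁ x = βx - 1` on `R`. -/
def rStep (β x : ℝ) (a : Bool) : ℝ := β * x - (if digitB β x a then 1 else 0)

/-- The random β-transformation in skew-product form. -/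
def Rmap (β : ℝ) (p : (ℕ → Bool) × ℝ) : (ℕ → Bool) × ℝ :=
  (shift p.1, rStep β p.2 (p.1 0))

/-- The random β-transformation `K_β` (shifting `ω` only on `S`). -/
def Kmap (β : ℝ) (p : (ℕ → Bool) × ℝ) : (ℕ → Bool) × ℝ :=
  if p.2 < 1 / β then (p.1, β * p.2)
  else if p.2 ≤ 1 / (β * (β - 1)) then (shift p.1, β * p.2 - (if p.1 0 then 1 else 0))
  else (p.1, β * p.2 - 1)

/-- `R^n_{β,w}(x)`: the second coordinate of `R_β^n (ω, x)` for any `ω` starting with `w`. -/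
def rItin (β x : ℝ) (w : List Bool) : ℝ := w.foldl (rStep β) x

/-- `r(w) = R^n_{β,w}(1)`. -/
def rW (β : ℝ) (w : List Bool) : ℝ := rItin β 1 w

/-- The (unnormalised) density `ρ*_β`. -/
def rhoStar (β x : ℝ) : ℝ :=
  ∑' n : ℕ, ((2 * β) ^ n)⁻¹ * ∑ w : Fin n → Bool,
    ((Set.Icc (0 : ℝ) (rW β (List.ofFn w))).indicator 1 x
      + (Set.Icc (rItin β (1 / (β - 1) - 1) (List.ofFn w)) (1 / (β - 1))).indicator 1 x)

/-- `m` is the `(1/2, 1/2)` Bernoulli measure on `{0,1}^ℕ`. -/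
def IsBernoulliHalf (m : Measure (ℕ → Bool)) : Prop :=
  IsProbabilityMeasure m ∧
    ∀ (n : ℕ) (w : Fin n → Bool), m {ω | ∀ i : Fin n, ω i = w i} = (2 : ℝ≥0∞)⁻¹ ^ n

/-- The probability measure `μ_β` on `I_β` with density `ρ*_β / ∫ ρ*_β` w.r.t. Lebesgue. -/
def muBeta (β : ℝ) : Measure ℝ :=
  (volume.restrict (Ibeta β)).withDensity
    (fun x => ENNReal.ofReal (rhoStar β x / ∫ y in Ibeta β, rhoStar β y))

/-- `l(w) = Σ ωᵢ 2^(i-1)`. -/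
def lVal : List Bool → ℕ
  | [] => 0
  | a :: t => (if a then 1 else 0) + 2 * lVal t

/-- `v(w) = Σ_{k<n} β^(-k) + l(w)/(2β)^n`. -/
def vVal (β : ℝ) (w : List Bool) : ℝ :=
  (∑ k ∈ Finset.range w.length, ((β : ℝ) ^ k)⁻¹) + (lVal w : ℝ) / (2 * β) ^ w.length

/-- The sublevel `E_w = Ω × [0, r(w)] × [v(w), v(w) + (2β)^(-n))` of the tower. -/
def Eset (β : ℝ) (w : List Bool) : Set ((ℕ → Bool) × ℝ × ℝ) :=
  {p | p.2.1 ∈ Set.Icc 0 (rW β w) ∧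
    p.2.2 ∈ Set.Ico (vVal β w) (vVal β w + ((2 * β) ^ w.length)⁻¹)}

/-- The tower `E`. -/
def Etower (β : ℝ) : Set ((ℕ → Bool) × ℝ × ℝ) := ⋃ w : List Bool, Eset β w

/-- The step from `w` to `wa` is of type `T₁`. -/
def stepT1 (β : ℝ) (w : List Bool) (a : Bool) : Prop := digitB β (rW β w) a = true

/-- `C₁(wa) = v(wa) - v(w)/(2β)`. -/
def C1 (β : ℝ) (w : List Bool) (a : Bool) : ℝ := vVal β (w ++ [a]) - vVal β w / (2 * β)

/-- `C₂(wa) = 1/(2β) + Σ (2β)^(-(m+1)) - v(w)/(2β)`, summing over pairs `(u, b)` with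
the step `u → ub` of type `T₁` and `v(u) < v(w)`. -/
def C2 (β : ℝ) (w : List Bool) : ℝ :=
  (2 * β)⁻¹ +
    (∑' u : {q : List Bool × Bool // stepT1 β q.1 q.2 ∧ vVal β q.1 < vVal β w},
      ((2 * β) ^ (u.1.1.length + 1))⁻¹) - vVal β w / (2 * β)

/-- The action of `ψ` on points of the sublevel `E_w`. -/
def psiAux (β : ℝ) (w : List Bool) (p : (ℕ → Bool) × ℝ × ℝ) : (ℕ → Bool) × ℝ × ℝ :=
  if digitB β (rW β w) (p.1 0) then
    if p.2.1 < 1 / β then (shift p.1, β * p.2.1, p.2.2 / (2 * β) + C2 β w)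
    else (shift p.1, β * p.2.1 - 1, p.2.2 / (2 * β) + C1 β w (p.1 0))
  else (shift p.1, β * p.2.1, p.2.2 / (2 * β) + C1 β w (p.1 0))

/-- The tower map `ψ : E → E` (the identity off the tower). -/
def psi (β : ℝ) (p : (ℕ → Bool) × ℝ × ℝ) : (ℕ → Bool) × ℝ × ℝ :=
  if h : ∃ w : List Bool, p ∈ Eset β w then psiAux β h.choose p else p

/-- The reflection `P(ω, x, y) = (ω̄, 1/(β-1) - x, -y)`. -/
def Pmap (β : ℝ) (p : (ℕ → Bool) × ℝ × ℝ) : (ℕ → Bool) × ℝ × ℝ :=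
  (compSeq p.1, 1 / (β - 1) - p.2.1, -p.2.2)

/-- The reflected tower `Ē = P(E)`. -/
def Ebar (β : ℝ) : Set ((ℕ → Bool) × ℝ × ℝ) := Pmap β '' Etower β

/-- The exceptional set `F_w ⊆ E_w` (empty unless `r(w) ∈ R`). -/
def Fset (β : ℝ) (w : List Bool) : Set ((ℕ → Bool) × ℝ × ℝ) :=
  {p | p ∈ Eset β w ∧ p.1 0 = false ∧ p.2.1 ∈ Sset β ∧ rW β w ∈ Rset β}

/-- The swap map `Q` interchanging `ψ(F_w)` with `ψ(F̄_w̄) = P(ψ(F_w))`. -/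
def Qmap (β : ℝ) (p : (ℕ → Bool) × ℝ × ℝ) : (ℕ → Bool) × ℝ × ℝ :=
  if ∃ w : List Bool, p ∈ psi β '' Fset β w then (p.1, p.2.1 + 1, -p.2.2)
  else if ∃ w : List Bool, p ∈ Pmap β '' (psi β '' Fset β w) then (p.1, p.2.1 - 1, -p.2.2)
  else p

/-- `ψ` extended to `E ∪ Ē`, acting by `P ∘ ψ ∘ P⁻¹` on `Ē`. -/
def psiFull (β : ℝ) (p : (ℕ → Bool) × ℝ × ℝ) : (ℕ → Bool) × ℝ × ℝ :=
  if p ∈ Etower β then psi β p else Pmap β (psi β (Pmap β p))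

/-- The corrected tower map `ψ̃ = Q ∘ ψ`. -/
def psiTilde (β : ℝ) : ((ℕ → Bool) × ℝ × ℝ) → ((ℕ → Bool) × ℝ × ℝ) :=
  Qmap β ∘ psiFull β

/-- `h(ω, x, n) = #{0 ≤ i ≤ n-1 : π₂(K_β^i(ω,x)) ∈ S}`. -/
def hCount (β : ℝ) (ω : ℕ → Bool) (x : ℝ) (n : ℕ) : ℕ :=
  ((Finset.range n).filter (fun i => ((Kmap β)^[i] (ω, x)).2 ∈ Sset β)).card

/-- `π_β(a) = Σ aᵢ β^(-(i+1))`. -/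
def piB (β : ℝ) (a : ℕ → Bool) : ℝ :=
  ∑' i : ℕ, (if a i then (1 : ℝ) else 0) * ((β : ℝ) ^ (i + 1))⁻¹

/-- `𝒩ₙ(x; β)`: the number of words of length `n` extendable to a β-expansion of `x`. -/
def Ncount (β x : ℝ) (n : ℕ) : ℕ :=
  {a : Fin n → Bool | ∃ b : ℕ → Bool, (∀ i : Fin n, b i = a i) ∧ x = piB β b}.ncard

end

/-! The `y`-intervals of distinct sublevels are disjoint, since a word is determined by its length
and by `l(w)`, and these order the intervals; so on `E_w` the map `ψ` is given by the branch
formulas of `w`. On an upward branch these formulas are the product of the shift, a bijection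
from the cylinder `{ω' | ω'₁ = a}` onto `Ω`, with two increasing affine maps carrying the `x`- and
`y`-intervals of `E_w` onto those of `E_{wa}`. The branch `T₀` starts at `x = 0`, the branch `T₁`
at `x = 1/β`, and `r(w) ≤ 1/(β-1)` keeps the latter inside `S ∪ R`. -/

open Set

lemma lVal_lt_two_pow (w : List Bool) : lVal w < 2 ^ w.length := by
  induction w with
  | nil => simp [lVal]
  | cons b t ih =>
    cases b <;> simp only [lVal, List.length_cons, pow_succ, Bool.false_eq_true, ↓reduceIte] <;>
      omega

lemma eq_of_lVal_eq : ∀ {w w' : List Bool}, w.length = w'.length → lVal w = lVal w' → w = w'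
  | [], [], _, _ => rfl
  | b :: t, b' :: t', hl, hv => by
    have hbt : b = b' ∧ lVal t = lVal t' := by
      cases b <;> cases b' <;>
        simp only [lVal, Bool.false_eq_true, Bool.true_eq_false, ↓reduceIte, true_and, false_and]
          at hv ⊢ <;> omega
    rw [hbt.1, eq_of_lVal_eq (Nat.succ.inj hl) hbt.2]

section vVal

variable {β : ℝ}

lemma vVal_add_inv_eq (w : List Bool) :
    vVal β w + ((2 * β) ^ w.length)⁻¹ = ∑ k ∈ Finset.range w.length, (β ^ k)⁻¹
      + ((lVal w : ℝ) + 1) / (2 * β) ^ w.length := by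
  rw [vVal, add_div, one_div, add_assoc]

lemma vVal_add_inv_le_sum (hβ : 0 < β) (w : List Bool) :
    vVal β w + ((2 * β) ^ w.length)⁻¹ ≤ ∑ k ∈ Finset.range (w.length + 1), (β ^ k)⁻¹ := by
  have hl : (lVal w : ℝ) + 1 ≤ 2 ^ w.length := by exact_mod_cast lVal_lt_two_pow w
  have hlast : ((lVal w : ℝ) + 1) / (2 * β) ^ w.length ≤ (β ^ w.length)⁻¹ := by
    rw [mul_pow, ← div_div, div_le_iff₀ (by positivity), inv_mul_cancel₀ (by positivity)]
    exact (div_le_one (by positivity)).mpr hl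
  rw [vVal_add_inv_eq, Finset.sum_range_succ]
  linarith

lemma sum_le_vVal (hβ : 0 < β) {n : ℕ} {w : List Bool} (h : n ≤ w.length) :
    ∑ k ∈ Finset.range n, (β ^ k)⁻¹ ≤ vVal β w :=
  calc ∑ k ∈ Finset.range n, (β ^ k)⁻¹ ≤ ∑ k ∈ Finset.range w.length, (β ^ k)⁻¹ :=
        Finset.sum_le_sum_of_subset_of_nonneg (Finset.range_subset_range.mpr h)
          fun _ _ _ => by positivity
    _ ≤ vVal β w := le_add_of_nonneg_right (by positivity)

lemma vVal_add_inv_le_of_length_lt (hβ : 0 < β) {w w' : List Bool}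
    (h : w.length < w'.length) : vVal β w + ((2 * β) ^ w.length)⁻¹ ≤ vVal β w' :=
  (vVal_add_inv_le_sum hβ w).trans (sum_le_vVal hβ h)

lemma vVal_add_inv_le_of_lVal_lt (hβ : 0 < β) {w w' : List Bool}
    (hl : w.length = w'.length) (h : lVal w < lVal w') :
    vVal β w + ((2 * β) ^ w.length)⁻¹ ≤ vVal β w' := by
  have h' : (lVal w : ℝ) + 1 ≤ lVal w' := by exact_mod_cast h
  rw [vVal_add_inv_eq, vVal, hl]
  gcongr

end vVal

lemma eq_of_mem_Eset {β : ℝ} (hβ : 0 < β) {p : (ℕ → Bool) × ℝ × ℝ} {w w' : List Bool}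
    (h : p ∈ Eset β w) (h' : p ∈ Eset β w') : w = w' := by
  have key : ∀ {u u'}, p ∈ Eset β u → p ∈ Eset β u' →
      ¬ vVal β u + ((2 * β) ^ u.length)⁻¹ ≤ vVal β u' :=
    fun hu hu' hle => by linarith [hu.2.2, hu'.2.1]
  obtain hl | hl | hl := lt_trichotomy w.length w'.length
  · exact absurd (vVal_add_inv_le_of_length_lt hβ hl) (key h h')
  · obtain hv | hv | hv := lt_trichotomy (lVal w) (lVal w')
    · exact absurd (vVal_add_inv_le_of_lVal_lt hβ hl hv) (key h h')
    · exact eq_of_lVal_eq hl hv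
    · exact absurd (vVal_add_inv_le_of_lVal_lt hβ hl.symm hv) (key h' h)
  · exact absurd (vVal_add_inv_le_of_length_lt hβ hl) (key h' h)

lemma psi_eq_psiAux {β : ℝ} (hβ : 0 < β) {p : (ℕ → Bool) × ℝ × ℝ} {w : List Bool}
    (hp : p ∈ Eset β w) : psi β p = psiAux β w p := by
  have hex : ∃ u, p ∈ Eset β u := ⟨w, hp⟩
  rw [psi, dif_pos hex, eq_of_mem_Eset hβ hex.choose_spec hp]

section Ibeta

variable {β : ℝ}

lemma Sset_union_Rset (hβ : 1 < β ∧ β < 2) :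
    Sset β ∪ Rset β = Icc (1 / β) (1 / (β - 1)) := by
  obtain ⟨hβ1, hβ2⟩ := hβ
  have hβm : 0 < β - 1 := by linarith
  apply Icc_union_Ioc_eq_Icc
  · rw [div_le_div_iff₀ (by positivity) (by positivity)]
    nlinarith
  · rw [div_le_div_iff₀ (by positivity) hβm]
    nlinarith

lemma rW_append (w : List Bool) (a : Bool) : rW β (w ++ [a]) = rStep β (rW β w) a := by
  simp [rW, rItin, List.foldl_append]

lemma rStep_mem_Ibeta (hβ : 1 < β ∧ β < 2) {x : ℝ} (hx : x ∈ Ibeta β) (a : Bool) :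
    rStep β x a ∈ Ibeta β := by
  obtain ⟨hβ1, hβ2⟩ := hβ
  obtain ⟨hx0, hx1⟩ := hx
  have hβ0 : 0 < β := by linarith
  have hβm : 0 < β - 1 := by linarith
  have hL : β * (1 / β) = 1 := by field_simp
  have hS : β * (1 / (β * (β - 1))) = 1 / (β - 1) := by field_simp
  have hR : β * (1 / (β - 1)) = 1 / (β - 1) + 1 := by field_simp; ring
  have hI : 1 ≤ 1 / (β - 1) := by rw [le_div_iff₀ hβm]; linarith
  unfold rStep digitB
  split_ifs <;> first | contradiction | constructor <;> nlinarith

lemma rW_mem_Ibeta (hβ : 1 < β ∧ β < 2) (w : List Bool) : rW β w ∈ Ibeta β := by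
  induction w using List.reverseRecOn with
  | nil =>
    have hβm : 0 < β - 1 := by linarith
    show (1 : ℝ) ∈ Icc 0 (1 / (β - 1))
    exact ⟨zero_le_one, by rw [le_div_iff₀ hβm]; linarith⟩
  | append_singleton w a ih => rw [rW_append]; exact rStep_mem_Ibeta hβ ih a

end Ibeta

lemma bijOn_shift (a : Bool) : BijOn shift {ω : ℕ → Bool | ω 0 = a} univ := by
  refine ⟨mapsTo_univ _ _, fun ω hω ω' hω' h => funext fun n => ?_,
    fun ω _ => ⟨Stream'.cons a ω, rfl, rfl⟩⟩
  cases n with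
  | zero => exact hω.trans hω'.symm
  | succ n => exact congrFun h n

lemma bijOn_affine_image {K : Type*} [DivisionRing K] {c : K} (hc : c ≠ 0) (b : K) (s : Set K) :
    BijOn (c * · + b) s ((c * · + b) '' s) :=
  ((add_left_injective b).comp (mul_right_injective₀ hc)).injOn.bijOn_image

lemma bijOn_shift_affine (a : Bool) {c e : ℝ} (hc : 0 < c) (he : 0 < e) (b f x₀ x₁ y₀ y₁ : ℝ) :
    BijOn (fun p : (ℕ → Bool) × ℝ × ℝ => (shift p.1, c * p.2.1 + b, e * p.2.2 + f))
      ({ω | ω 0 = a} ×ˢ Icc x₀ x₁ ×ˢ Ico y₀ y₁)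
      (univ ×ˢ Icc (c * x₀ + b) (c * x₁ + b) ×ˢ Ico (e * y₀ + f) (e * y₁ + f)) := by
  have hx := bijOn_affine_image hc.ne' b (Icc x₀ x₁)
  have hy := bijOn_affine_image he.ne' f (Ico y₀ y₁)
  rw [image_affine_Icc' hc] at hx
  rw [image_affine_Ico he] at hy
  exact (bijOn_shift a).prodMap (hx.prodMap hy)

lemma Eset_eq_prod (β : ℝ) (w : List Bool) :
    Eset β w = univ ×ˢ Icc 0 (rW β w) ×ˢ Ico (vVal β w) (vVal β w + ((2 * β) ^ w.length)⁻¹) := by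
  ext p
  simp [Eset]

lemma bijOn_upward {β : ℝ} (hβ : 0 < β) (w : List Bool) (a : Bool) {d x₀ : ℝ}
    (hx₀ : β * x₀ - d = 0) (hr : rW β (w ++ [a]) = β * rW β w - d) :
    BijOn (fun p : (ℕ → Bool) × ℝ × ℝ => (shift p.1, β * p.2.1 - d, p.2.2 / (2 * β) + C1 β w a))
      ({ω | ω 0 = a} ×ˢ Icc x₀ (rW β w) ×ˢ
        Ico (vVal β w) (vVal β w + ((2 * β) ^ w.length)⁻¹))
      (Eset β (w ++ [a])) := by
  have h := bijOn_shift_affine a hβ (inv_pos.2 (mul_pos two_pos hβ)) (-d) (C1 β w a) x₀ (rW β w)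
    (vVal β w) (vVal β w + ((2 * β) ^ w.length)⁻¹)
  have hv : (2 * β)⁻¹ * vVal β w + C1 β w a = vVal β (w ++ [a]) := by rw [C1]; ring
  have hv' : (2 * β)⁻¹ * (vVal β w + ((2 * β) ^ w.length)⁻¹) + C1 β w a
      = vVal β (w ++ [a]) + ((2 * β) ^ (w ++ [a]).length)⁻¹ := by
    rw [C1, List.length_append, List.length_singleton, pow_succ]
    ring
  simp only [← sub_eq_add_neg] at h
  rw [hx₀, ← hr, hv, hv', ← Eset_eq_prod] at h
  convert h using 2 with p
  rw [div_eq_inv_mul]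

lemma bijOn_psi_of_not_stepT1 {β : ℝ} (hβ : 0 < β) {w : List Bool} {a : Bool}
    (h : ¬ stepT1 β w a) :
    BijOn (psi β) {p | p ∈ Eset β w ∧ p.1 0 = a} (Eset β (w ++ [a])) := by
  have hd : digitB β (rW β w) a = false := Bool.eq_false_iff.mpr h
  have hsrc : {p | p ∈ Eset β w ∧ p.1 0 = a} = {ω | ω 0 = a} ×ˢ Icc 0 (rW β w) ×ˢ
      Ico (vVal β w) (vVal β w + ((2 * β) ^ w.length)⁻¹) := by
    ext p
    simp [Eset_eq_prod, and_comm]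
  rw [hsrc]
  refine (bijOn_upward hβ w a (d := 0) (by ring) ?_).congr ?_
  · rw [rW_append, rStep, hd]
    simp
  · rintro p ⟨hpa, hx, hy⟩
    have hp : p ∈ Eset β w := ⟨hx, hy⟩
    rw [psi_eq_psiAux hβ hp, psiAux, hpa, hd]
    simp

lemma bijOn_psi_of_stepT1 {β : ℝ} (hβ : 1 < β ∧ β < 2) {w : List Bool} {a : Bool}
    (h : stepT1 β w a) :
    BijOn (psi β) {p | p ∈ Eset β w ∧ p.1 0 = a ∧ p.2.1 ∈ Sset β ∪ Rset β}
      (Eset β (w ++ [a])) := by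
  have hβ0 : 0 < β := by linarith
  have hr : rW β w ≤ 1 / (β - 1) := (rW_mem_Ibeta hβ w).2
  have hsrc : {p | p ∈ Eset β w ∧ p.1 0 = a ∧ p.2.1 ∈ Sset β ∪ Rset β} =
      {ω | ω 0 = a} ×ˢ Icc (1 / β) (rW β w) ×ˢ
        Ico (vVal β w) (vVal β w + ((2 * β) ^ w.length)⁻¹) := by
    ext p
    simp only [Eset_eq_prod, Sset_union_Rset hβ, mem_ofPred_eq, mem_prod, mem_univ, true_and,
      mem_Icc]
    constructor
    · rintro ⟨⟨⟨-, hx⟩, hy⟩, hpa, hx', -⟩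
      exact ⟨hpa, ⟨hx', hx⟩, hy⟩
    · rintro ⟨hpa, ⟨hx', hx⟩, hy⟩
      exact ⟨⟨⟨(one_div_pos.2 hβ0).le.trans hx', hx⟩, hy⟩, hpa, hx', hx.trans hr⟩
  rw [hsrc]
  refine (bijOn_upward hβ0 w a (d := 1) (by field_simp; ring) ?_).congr ?_
  · rw [rW_append, rStep, h]
    simp
  · rintro p ⟨hpa, hx, hy⟩
    have hp : p ∈ Eset β w := ⟨⟨(one_div_pos.2 hβ0).le.trans hx.1, hx.2⟩, hy⟩
    rw [psi_eq_psiAux hβ0 hp, psiAux, hpa, h, if_pos rfl, if_neg (not_lt.2 hx.1)]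

/-- the upward branches of `ψ` are bijections onto the next sublevel: if the step
`w → wa` is of type `T₀` then `ψ` maps `{(ω',x,y) ∈ E_w : ω'₁ = a}` bijectively onto `E_{wa}`,
and if it is of type `T₁` then `ψ` maps `{(ω',x,y) ∈ E_w : ω'₁ = a, x ∈ S ∪ R}` bijectively
onto `E_{wa}`. -/
theorem stmt8 (β : ℝ) (hβ : 1 < β ∧ β < 2) (w : List Bool) (a : Bool) :
    (¬ stepT1 β w a →
      Set.BijOn (psi β) {p | p ∈ Eset β w ∧ p.1 0 = a} (Eset β (w ++ [a]))) ∧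
    (stepT1 β w a →
      Set.BijOn (psi β) {p | p ∈ Eset β w ∧ p.1 0 = a ∧ p.2.1 ∈ Sset β ∪ Rset β}
        (Eset β (w ++ [a]))) :=
  ⟨bijOn_psi_of_not_stepT1 (zero_lt_one.trans hβ.1), bijOn_psi_of_stepT1 hβ⟩

end RandomBeta
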